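/- arXiv:1310.5455 — 3 statements merged into one kernel-verified Lean document; each statement's English description precedes it below -/
import Mathlib

section
/- For all trace-zero 3×3 matrices x, y, z over F: n(x*y) = n(x)·n(y), and b(x*y, z) = b(x, y*z), where b(x,y) = −tr(xy). That is, the Okubo algebra (sl₃(F), *, n) is a symmetric composition algebra: its norm is multiplicative and its polar form is associative. -/
variable {F : Type} [Field F]

/-- The Okubo product on `3×3` matrices (restricted to trace-zero matrices):
`x * y = ω • (xy) - ω² • (yx) - ((ω - ω²)/3) tr(xy) • 1`. -/
def okm (ω : F) (x y : Matrix (Fin 3) (Fin 3) F) : Matrix (Fin 3) (Fin 3) F :=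
  ω • (x * y) - ω ^ 2 • (y * x) -
    (((ω - ω ^ 2) / 3) * (x * y).trace) • (1 : Matrix (Fin 3) (Fin 3) F)

/-- The quadratic form `n(x)`: the coefficient of `T` in the characteristic polynomial
`det (T•1 - x) = T³ - tr(x)T² + n(x)T - det(x)`. -/
noncomputable def nq (x : Matrix (Fin 3) (Fin 3) F) : F := x.charpoly.coeff 1

/-!
Associativity of `b` is a trace computation: against a trace-zero matrix the scalar term of the
Okubo product disappears, and both sides become `ω tr(xyz) - ω² tr(yxz)` by cyclicity.

For multiplicativity, `n` is a quadratic form on `M₃(F)` with polar form `tr a tr b - tr(ab)`.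
Expanding `n(ω xy - ω² yx - c tr(xy) 1)`, where `c = (ω - ω²)/3`, with `ω³ = 1`, `3c² = -1`
and `n(xy) = n(yx)` gives `n(x*y) = tr(x²y²) - n(xy)`. For trace-zero `x` the Cayley–Hamilton
theorem reads `x² = adj x - n(x) 1`; since `adj(yx) = adj x adj y` and `tr (adj a) = n(a)`,
this yields `tr(x²y²) = n(x) n(y) + n(xy)`. Nothing is divided by `2`, so characteristic `2`
is included.
-/

open Matrix

theorem nq_eq_principal_minors (M : Matrix (Fin 3) (Fin 3) F) :
    nq M = M 0 0 * M 1 1 + M 0 0 * M 2 2 + M 1 1 * M 2 2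
      - M 0 1 * M 1 0 - M 0 2 * M 2 0 - M 1 2 * M 2 1 := by
  rw [nq, charpoly, det_fin_three]
  simp only [charmatrix_apply_eq, ne_eq, Fin.reduceEq, not_false_eq_true, charmatrix_apply_ne,
    Polynomial.coeff_sub, Polynomial.coeff_add, Polynomial.coeff_neg, mul_neg, neg_mul, neg_neg]
  ring_nf
  simp only [Polynomial.X_mul_C, Polynomial.X_pow_mul_C, Polynomial.coeff_sub,
    Polynomial.coeff_add, Polynomial.coeff_mul_C, Polynomial.coeff_C_mul, Polynomial.coeff_X,
    Polynomial.coeff_X_pow, Polynomial.coeff_C]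
  norm_num
  ring

theorem nq_add (a b : Matrix (Fin 3) (Fin 3) F) :
    nq (a + b) = nq a + nq b + (a.trace * b.trace - (a * b).trace) := by
  simp only [nq_eq_principal_minors, trace_fin_three, Matrix.add_apply, mul_apply,
    Fin.sum_univ_three]
  ring

theorem nq_smul (r : F) (a : Matrix (Fin 3) (Fin 3) F) : nq (r • a) = r ^ 2 * nq a := by
  simp only [nq_eq_principal_minors, Matrix.smul_apply, smul_eq_mul]
  ring

theorem nq_sub (a b : Matrix (Fin 3) (Fin 3) F) :
    nq (a - b) = nq a + nq b - (a.trace * b.trace - (a * b).trace) := by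
  rw [sub_eq_add_neg, nq_add, ← neg_one_smul F b, nq_smul]
  simp only [trace_smul, Matrix.mul_smul, smul_eq_mul]
  ring

theorem nq_one : nq (1 : Matrix (Fin 3) (Fin 3) F) = 3 := by
  simp only [nq_eq_principal_minors, one_apply_eq, ne_eq, Fin.reduceEq, not_false_eq_true,
    one_apply_ne]
  norm_num

theorem nq_mul_comm (a b : Matrix (Fin 3) (Fin 3) F) : nq (a * b) = nq (b * a) := by
  rw [nq, nq, charpoly_mul_comm]

theorem trace_adjugate_eq_nq (M : Matrix (Fin 3) (Fin 3) F) : M.adjugate.trace = nq M := by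
  rw [adjugate_fin_three, nq_eq_principal_minors, trace_fin_three]
  simp only [of_apply, cons_val', cons_val_zero, cons_val_one, cons_val, cons_val_fin_one]
  ring

theorem adjugate_eq_mul_self_sub_trace_smul_add_nq_smul (M : Matrix (Fin 3) (Fin 3) F) :
    M.adjugate = M * M - M.trace • M + nq M • (1 : Matrix (Fin 3) (Fin 3) F) := by
  ext i j
  rw [adjugate_fin_three, nq_eq_principal_minors, trace_fin_three]
  fin_cases i <;> fin_cases j <;> simp [mul_apply, Fin.sum_univ_three] <;> ring

theorem trace_mul_self_mul_mul_self {x y : Matrix (Fin 3) (Fin 3) F}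
    (hx : x.trace = 0) (hy : y.trace = 0) :
    (x * x * (y * y)).trace = nq x * nq y + nq (x * y) := by
  have mul_self_eq {a : Matrix (Fin 3) (Fin 3) F} (ha : a.trace = 0) :
      a * a = a.adjugate - nq a • 1 := by
    rw [adjugate_eq_mul_self_sub_trace_smul_add_nq_smul, ha, zero_smul, sub_zero,
      add_sub_cancel_right]
  rw [mul_self_eq hx, mul_self_eq hy, nq_mul_comm, ← trace_adjugate_eq_nq (y * x),
    adjugate_mul_distrib]
  simp only [sub_mul, mul_sub, Matrix.smul_mul, Matrix.mul_smul, Matrix.one_mul, Matrix.mul_one,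
    trace_sub, trace_smul, trace_one, trace_adjugate_eq_nq, smul_eq_mul, Fintype.card_fin]
  ring

theorem nq_okm {ω : F} (hω : ω ^ 2 + ω + 1 = 0) (h3 : (3 : F) ≠ 0)
    (x y : Matrix (Fin 3) (Fin 3) F) :
    nq (okm ω x y) = (x * x * (y * y)).trace - nq (x * y) := by
  rw [okm, nq_sub, nq_sub, nq_smul, nq_smul, nq_smul, nq_one, nq_mul_comm y x]
  simp only [trace_sub, trace_smul, trace_one, Matrix.smul_mul, Matrix.mul_smul, sub_mul,
    Matrix.mul_one, smul_eq_mul, Fintype.card_fin, Matrix.mul_assoc]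
  have trace_cycle : (x * (y * (y * x))).trace = (x * (x * (y * y))).trace := by
    rw [← Matrix.mul_assoc y y x, trace_mul_comm x, Matrix.mul_assoc, trace_mul_comm,
      Matrix.mul_assoc]
  rw [trace_mul_comm y x, trace_cycle]
  field_simp
  -- the certificate encodes `ω³ = 1` and `(ω - ω²)² = -3`
  linear_combination (3 * nq (x * y) * (ω ^ 2 - ω + 1) - (x * y).trace ^ 2 * ω ^ 2
    + 3 * (x * (x * (y * y))).trace * (ω - 1)) * hω

theorem trace_okm_mul_eq_trace_mul_okm (ω : F) {x y z : Matrix (Fin 3) (Fin 3) F}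
    (hx : x.trace = 0) (hz : z.trace = 0) :
    (okm ω x y * z).trace = (x * okm ω y z).trace := by
  simp only [okm, sub_mul, mul_sub, Matrix.smul_mul, Matrix.mul_smul, Matrix.one_mul,
    Matrix.mul_one, trace_sub, trace_smul, hx, hz, smul_eq_mul, mul_zero, Matrix.mul_assoc]
  rw [trace_mul_comm y (x * z), Matrix.mul_assoc]

theorem three_ne_zero_of_sq_add_self_add_one {ω : F} (hω : ω ^ 2 + ω + 1 = 0)
    (hω1 : ω ≠ 1) : (3 : F) ≠ 0 := by
  intro h3
  refine hω1 (sub_eq_zero.mp (pow_eq_zero_iff two_ne_zero |>.mp ?_))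
  linear_combination hω - ω * h3

/-- For trace-zero `3×3` matrices `x, y, z` over a field containing a
primitive cube root of unity `ω`: `n(x*y) = n(x)n(y)` and `b(x*y, z) = b(x, y*z)` where
`b(x,y) = -tr(xy)`; i.e. the Okubo algebra is a symmetric composition algebra. -/
theorem okubo_matrix_symmetric_composition (ω : F) (hω : ω ^ 2 + ω + 1 = 0) (hω1 : ω ≠ 1)
    (x y z : Matrix (Fin 3) (Fin 3) F)
    (hx : x.trace = 0) (hy : y.trace = 0) (hz : z.trace = 0) :
    nq (okm ω x y) = nq x * nq y ∧
    -(okm ω x y * z).trace = -(x * okm ω y z).trace := by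
  refine ⟨?_, by rw [trace_okm_mul_eq_trace_mul_okm ω hx hz]⟩
  rw [nq_okm hω (three_ne_zero_of_sq_add_self_add_one hω hω1), trace_mul_self_mul_mul_self hx hy]
  ring
end

section
/- Let F be algebraically closed of characteristic 3, R a commutative unital F-algebra, and O_R the split Okubo algebra over R with basis (e_g)_{g ∈ I} and product *. For α, β ∈ R with α³ = β³ = 1, the R-linear map d_{α,β} defined by d_{α,β}(e_{(i,j)}) = α^{i.val}·β^{j.val} • e_{(i,j)} is an automorphism of (O_R, *). Moreover, every R-linear automorphism φ of (O_R, *) admits a unique factorization φ = h ∘ d_{α,β}, where h is an R-linear automorphism of (O_R, *) fixing the element e = Σ_{g ∈ I} e_g and α, β ∈ R satisfy α³ = β³ = 1. -/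
/-!
In characteristic `3` the structure constants satisfy `c(g,h) + c(h,g) = -1`, which gives
`e * x + x * e = x - t(x) • e`, where `t(x)` is the sum of the coordinates of `x`. For an
automorphism `φ`, transporting this along `φ⁻¹` shows that `u = φ⁻¹ e` satisfies
`u * e_k + e_k * u = e_k - s_k • u` for scalars `s_k`. Comparing coordinates gives `s_k u_k = 1`
and `u_{p-k} = s_k u_p`, so the coordinates of `u` are units and shifting the index by `(1,0)` or
`(0,1)` multiplies them by fixed scalars `γ`, `δ`; going around a cycle of length three forces
`γ³ = δ³ = 1`, and then `u = d_{γ,δ}(e)`. Hence `h = φ ∘ d_{γ,δ}` fixes `e` and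
`φ = h ∘ d_{γ²,δ²}`. For uniqueness, `d_{α,β}(e)` determines `α` and `β` through its
`(1,0)` and `(0,1)` coordinates.
-/

open scoped BigOperators

/-- The grading group `ℤ₃ × ℤ₃`. -/
abbrev OkG : Type := ZMod 3 × ZMod 3

/-- The index set of the standard basis of the split Okubo algebra:
the nonzero elements of `ℤ₃ × ℤ₃`. -/
abbrev OkI : Type := {g : OkG // g ≠ 0}

variable (R : Type) [CommRing R]

/-- The structure constants `c(g,h) = 1 - ((g₁h₂ - g₂h₁).val : ℤ)` of the split Okubo algebra. -/
def okc (g h : OkG) : R :=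
  ((1 - (((g.1 * h.2 - g.2 * h.1 : ZMod 3)).val : ℤ) : ℤ) : R)

/-- Underlying function of the split Okubo multiplication. -/
def okMulFun (x y : OkI → R) : OkI → R := fun k =>
  ∑ g : OkI, ∑ h : OkI,
    (if (g : OkG) + (h : OkG) = (k : OkG) then okc R (g : OkG) (h : OkG) else 0) * (x g * y h)

/-- The split Okubo multiplication, as a bilinear map: the unique `R`-bilinear map with
`e_g * e_h = 0` if `g + h = 0` and `e_g * e_h = c(g,h) • e_(g+h)` otherwise. -/
def okMul : (OkI → R) →ₗ[R] (OkI → R) →ₗ[R] (OkI → R) :=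
  LinearMap.mk₂ R (okMulFun R)
    (by intro m₁ m₂ n; funext k; simp [okMulFun, add_mul, mul_add, Finset.sum_add_distrib])
    (by intro c m n; funext k
        simp only [okMulFun, Pi.smul_apply, smul_eq_mul, Finset.mul_sum]
        exact Finset.sum_congr rfl fun g _ => Finset.sum_congr rfl fun h _ => by ring)
    (by intro m n₁ n₂; funext k; simp [okMulFun, add_mul, mul_add, Finset.sum_add_distrib])
    (by intro c m n; funext k
        simp only [okMulFun, Pi.smul_apply, smul_eq_mul, Finset.mul_sum]
        exact Finset.sum_congr rfl fun g _ => Finset.sum_congr rfl fun h _ => by ring)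

/-- The norm (quadratic form) of the split Okubo algebra: the unique quadratic form
with `n(e_g) = 0` and polar form `b(e_g, e_h) = 1` if `g + h = 0`, and `0` otherwise. -/
def okN (x : OkI → R) : R :=
  x ⟨(1, 0), by decide⟩ * x ⟨(2, 0), by decide⟩ +
  x ⟨(0, 1), by decide⟩ * x ⟨(0, 2), by decide⟩ +
  x ⟨(1, 1), by decide⟩ * x ⟨(2, 2), by decide⟩ +
  x ⟨(1, 2), by decide⟩ * x ⟨(2, 1), by decide⟩

/-- The polar form of the norm `okN`. -/
def okB (x y : OkI → R) : R := okN R (x + y) - okN R x - okN R y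

/-- The basis element `e_g` of the split Okubo algebra. -/
def okE (g : OkI) : OkI → R := Pi.single g 1

/-- The sum `e = ∑_{g ∈ I} e_g` of all eight basis elements. -/
def oke : OkI → R := ∑ g : OkI, okE R g

/-- The diagonal map `d_{α,β} : e_(i,j) ↦ α^i β^j • e_(i,j)`. -/
def okDiag (α β : R) : (OkI → R) →ₗ[R] (OkI → R) where
  toFun x := fun g => α ^ (g : OkG).1.val * β ^ (g : OkG).2.val * x g
  map_add' := by intro a b; funext g; simp [mul_add]
  map_smul' := by
    intro c a; funext g
    simp only [Pi.smul_apply, smul_eq_mul, RingHom.id_apply]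
    ring

variable {R}

lemma okc_add_okc_swap (h3 : (3 : R) = 0) (a b : OkG) : okc R a b + okc R b a = -1 := by
  have hswap : b.1 * a.2 - b.2 * a.1 = -(a.1 * b.2 - a.2 * b.1) := by ring
  have hval : ∀ d : ZMod 3, (d.val + (-d).val : ℤ) = 0 ∨ (d.val + (-d).val : ℤ) = 3 := by decide
  simp only [okc, hswap]
  push_cast
  rcases hval (a.1 * b.2 - a.2 * b.1) with h | h <;>
    have h' := congrArg (Int.cast : ℤ → R) h <;> push_cast at h'
  · linear_combination -h' + h3
  · linear_combination -h'

def okExt (x : OkI → R) (g : OkG) : R := if h : g = 0 then 0 else x ⟨g, h⟩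

@[simp] lemma okExt_zero (x : OkI → R) : okExt x 0 = 0 := dif_pos rfl

lemma okExt_of_ne_zero (x : OkI → R) {g : OkG} (hg : g ≠ 0) : okExt x g = x ⟨g, hg⟩ :=
  dif_neg hg

@[simp] lemma okExt_coe (x : OkI → R) (g : OkI) : okExt x g = x g := dif_neg g.2

lemma okMul_apply_eq_sum_left (x y : OkI → R) (k : OkI) :
    okMul R x y k = ∑ h : OkI, okc R (k - h) h * (okExt x (k - h) * y h) := by
  change okMulFun R x y k = _
  rw [okMulFun, Finset.sum_comm]
  refine Finset.sum_congr rfl fun h _ => ?_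
  by_cases hk : (k : OkG) - h = 0
  · rw [hk, okExt_zero, zero_mul, mul_zero]
    refine Finset.sum_eq_zero fun g _ => ?_
    rw [if_neg, zero_mul]
    intro hgk
    exact g.2 (by rwa [← hgk, add_sub_cancel_right] at hk)
  · rw [Fintype.sum_eq_single (⟨k - h, hk⟩ : OkI), if_pos (sub_add_cancel _ _)]
    · rw [okExt_of_ne_zero x hk]
    · intro g hg
      rw [if_neg, zero_mul]
      exact fun hgk => hg (Subtype.ext (eq_sub_of_add_eq hgk))

lemma okMul_apply_eq_sum_right (x y : OkI → R) (k : OkI) :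
    okMul R x y k = ∑ g : OkI, okc R g (k - g) * (x g * okExt y (k - g)) := by
  change okMulFun R x y k = _
  rw [okMulFun]
  refine Finset.sum_congr rfl fun g _ => ?_
  by_cases hk : (k : OkG) - g = 0
  · rw [hk, okExt_zero, mul_zero, mul_zero]
    refine Finset.sum_eq_zero fun h _ => ?_
    rw [if_neg, zero_mul]
    intro hgk
    exact h.2 (by rwa [← hgk, add_sub_cancel_left] at hk)
  · rw [Fintype.sum_eq_single (⟨k - g, hk⟩ : OkI), if_pos (add_sub_cancel _ _)]
    · rw [okExt_of_ne_zero y hk]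
    · intro h hh
      rw [if_neg, zero_mul]
      exact fun hgk => hh (Subtype.ext (eq_sub_of_add_eq' hgk))

lemma okMul_okE_apply (x : OkI → R) (k p : OkI) :
    okMul R x (okE R k) p = okc R (p - k) k * okExt x (p - k) := by
  rw [okMul_apply_eq_sum_left, Fintype.sum_eq_single k, okE, Pi.single_eq_same, mul_one]
  intro h hh
  rw [okE, Pi.single_eq_of_ne hh, mul_zero, mul_zero]

lemma okE_okMul_apply (x : OkI → R) (k p : OkI) :
    okMul R (okE R k) x p = okc R k (p - k) * okExt x (p - k) := by
  rw [okMul_apply_eq_sum_right, Fintype.sum_eq_single k, okE, Pi.single_eq_same, one_mul]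
  intro h hh
  rw [okE, Pi.single_eq_of_ne hh, zero_mul, mul_zero]

@[simp] lemma oke_apply (g : OkI) : oke R g = 1 := by
  simp [oke, okE, Finset.sum_apply, Pi.single_apply]

lemma okMul_oke_add_okMul_oke (h3 : (3 : R) = 0) (x : OkI → R) :
    okMul R (oke R) x + okMul R x (oke R) = x - (∑ g, x g) • oke R := by
  funext p
  have hterm : ∀ h : OkI, okc R (p - h) h * (okExt (oke R) (p - h) * x h)
      + okc R h (p - h) * (x h * okExt (oke R) (p - h)) = (if h = p then x h else 0) - x h := by
    intro h
    by_cases hhp : h = p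
    · simp [hhp]
    · have hne : (p : OkG) - h ≠ 0 := sub_ne_zero.mpr fun e => hhp (Subtype.ext e.symm)
      rw [if_neg hhp, okExt_of_ne_zero _ hne, oke_apply]
      linear_combination x h * okc_add_okc_swap h3 (p - h) h
  simp only [Pi.add_apply, Pi.sub_apply, Pi.smul_apply, smul_eq_mul, oke_apply, mul_one,
    okMul_apply_eq_sum_left (oke R), okMul_apply_eq_sum_right _ (oke R),
    ← Finset.sum_add_distrib, hterm, Finset.sum_sub_distrib, Finset.sum_ite_eq', Finset.mem_univ,
    if_true]

lemma pow_val_add_of_pow_eq_one {M : Type*} [Monoid M] {n : ℕ} [NeZero n] {a : M}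
    (ha : a ^ n = 1) (i j : ZMod n) : a ^ (i + j).val = a ^ i.val * a ^ j.val := by
  rw [ZMod.val_add, ← pow_eq_pow_mod _ ha, pow_add]

section Diag

variable {α β α' β' : R}

@[simp] lemma okDiag_apply (x : OkI → R) (g : OkI) :
    okDiag R α β x g = α ^ (g : OkG).1.val * β ^ (g : OkG).2.val * x g := rfl

lemma okDiag_okDiag (x : OkI → R) :
    okDiag R α β (okDiag R α' β' x) = okDiag R (α * α') (β * β') x := by
  funext g
  simp only [okDiag_apply, mul_pow]
  ring

lemma okDiag_one_one (x : OkI → R) : okDiag R 1 1 x = x := by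
  funext g
  simp

lemma okDiag_okDiag_sq (hα : α ^ 3 = 1) (hβ : β ^ 3 = 1) (x : OkI → R) :
    okDiag R α β (okDiag R (α ^ 2) (β ^ 2) x) = x := by
  rw [okDiag_okDiag, ← pow_succ', ← pow_succ', hα, hβ, okDiag_one_one]

lemma okDiag_sq_okDiag (hα : α ^ 3 = 1) (hβ : β ^ 3 = 1) (x : OkI → R) :
    okDiag R (α ^ 2) (β ^ 2) (okDiag R α β x) = x := by
  rw [okDiag_okDiag, ← pow_succ, ← pow_succ, hα, hβ, okDiag_one_one]

def okDiagEquiv (hα : α ^ 3 = 1) (hβ : β ^ 3 = 1) : (OkI → R) ≃ₗ[R] (OkI → R) :=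
  { okDiag R α β with
    invFun := okDiag R (α ^ 2) (β ^ 2)
    left_inv := okDiag_sq_okDiag hα hβ
    right_inv := okDiag_okDiag_sq hα hβ }

lemma okDiag_okMul (hα : α ^ 3 = 1) (hβ : β ^ 3 = 1) (x y : OkI → R) :
    okDiag R α β (okMul R x y) = okMul R (okDiag R α β x) (okDiag R α β y) := by
  funext k
  change _ * okMulFun R x y k = okMulFun R _ _ k
  simp only [okMulFun, Finset.mul_sum, okDiag_apply]
  refine Finset.sum_congr rfl fun g _ => Finset.sum_congr rfl fun h _ => ?_
  split_ifs with hgh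
  · rw [← hgh, Prod.fst_add, Prod.snd_add, pow_val_add_of_pow_eq_one hα,
      pow_val_add_of_pow_eq_one hβ]
    ring
  · ring

lemma okDiag_oke_injective (h : okDiag R α β (oke R) = okDiag R α' β' (oke R)) :
    α = α' ∧ β = β' := by
  have h10 := congrFun h ⟨(1, 0), by decide⟩
  have h01 := congrFun h ⟨(0, 1), by decide⟩
  have hval : (1 : ZMod 3).val = 1 := rfl
  simp only [okDiag_apply, oke_apply, hval, ZMod.val_zero, pow_one, pow_zero, mul_one,
    one_mul] at h10 h01
  exact ⟨h10, h01⟩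

end Diag

lemma okMul_symm_oke_add_okMul_symm_oke (h3 : (3 : R) = 0) (φ : (OkI → R) ≃ₗ[R] (OkI → R))
    (hφ : ∀ x y, φ (okMul R x y) = okMul R (φ x) (φ y)) (y : OkI → R) :
    okMul R (φ.symm (oke R)) y + okMul R y (φ.symm (oke R))
      = y - (∑ g, φ y g) • φ.symm (oke R) := by
  apply φ.injective
  simp only [map_add, map_sub, map_smul, hφ, LinearEquiv.apply_symm_apply]
  exact okMul_oke_add_okMul_oke h3 (φ y)

section Coefficients

variable {u : OkI → R} {s : R} {k : OkI}

lemma mul_apply_eq_one_of_okMul_okE_add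
    (hu : okMul R u (okE R k) + okMul R (okE R k) u = okE R k - s • u) : s * u k = 1 := by
  have hk := congrFun hu k
  rw [Pi.add_apply, Pi.sub_apply, Pi.smul_apply, smul_eq_mul, okMul_okE_apply, okE_okMul_apply,
    sub_self, okExt_zero, okE, Pi.single_eq_same] at hk
  linear_combination hk

lemma apply_eq_mul_apply_of_okMul_okE_add (h3 : (3 : R) = 0)
    (hu : okMul R u (okE R k) + okMul R (okE R k) u = okE R k - s • u) {p a : OkI}
    (hpk : p ≠ k) (ha : (a : OkG) = p - k) : u a = s * u p := by
  have hp := congrFun hu p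
  rw [Pi.add_apply, Pi.sub_apply, Pi.smul_apply, smul_eq_mul, okMul_okE_apply, okE_okMul_apply,
    ← ha, okExt_coe, okE, Pi.single_eq_of_ne hpk] at hp
  linear_combination -hp + u a * okc_add_okc_swap h3 a k

end Coefficients

local notation "𝔢" i:max j:max => (⟨(i, j), by decide⟩ : OkI)

lemma exists_eq_okDiag_oke (h3 : (3 : R) = 0) {u s : OkI → R}
    (hu : ∀ k, okMul R u (okE R k) + okMul R (okE R k) u = okE R k - s k • u) :
    ∃ γ δ : R, γ ^ 3 = 1 ∧ δ ^ 3 = 1 ∧ u = okDiag R γ δ (oke R) := by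
  have unit (k : OkI) : s k * u k = 1 := mul_apply_eq_one_of_okMul_okE_add (hu k)
  have shift (k p a : OkI) (hpk : p ≠ k) (ha : (a : OkG) = p - k) : u a = s k * u p :=
    apply_eq_mul_apply_of_okMul_okE_add h3 (hu k) hpk ha
  -- shifting the index by `(1,0)`, resp. `(0,1)`, multiplies `u` by `μ`, resp. `ν`
  set μ := s (𝔢 2 0)
  set ν := s (𝔢 0 2)
  have r20 : u (𝔢 2 0) = μ * u (𝔢 1 0) := shift _ _ _ (by decide) (by decide)
  have r11 : u (𝔢 1 1) = μ * u (𝔢 0 1) := shift _ _ _ (by decide) (by decide)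
  have r21 : u (𝔢 2 1) = μ * u (𝔢 1 1) := shift _ _ _ (by decide) (by decide)
  have r01 : u (𝔢 0 1) = μ * u (𝔢 2 1) := shift _ _ _ (by decide) (by decide)
  have r12 : u (𝔢 1 2) = μ * u (𝔢 0 2) := shift _ _ _ (by decide) (by decide)
  have r22 : u (𝔢 2 2) = μ * u (𝔢 1 2) := shift _ _ _ (by decide) (by decide)
  have c02 : u (𝔢 0 2) = ν * u (𝔢 0 1) := shift _ _ _ (by decide) (by decide)
  have c11 : u (𝔢 1 1) = ν * u (𝔢 1 0) := shift _ _ _ (by decide) (by decide)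
  have c12 : u (𝔢 1 2) = ν * u (𝔢 1 1) := shift _ _ _ (by decide) (by decide)
  have c10 : u (𝔢 1 0) = ν * u (𝔢 1 2) := shift _ _ _ (by decide) (by decide)
  have hμ : μ ^ 3 = 1 := by
    linear_combination (1 - μ ^ 3) * unit (𝔢 0 1) - s (𝔢 0 1) * (μ ^ 2 * r11 + μ * r21 + r01)
  have hν : ν ^ 3 = 1 := by
    linear_combination (1 - ν ^ 3) * unit (𝔢 1 0) - s (𝔢 1 0) * (ν ^ 2 * c11 + ν * c12 + c10)
  have hu10 : u (𝔢 1 0) = μ := by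
    linear_combination -u (𝔢 1 0) * hμ + μ * (unit (𝔢 2 0) - μ * r20)
  have hu01 : u (𝔢 0 1) = ν := by
    linear_combination -u (𝔢 0 1) * hν + ν * (unit (𝔢 0 2) - ν * c02)
  refine ⟨μ, ν, hμ, hν, funext fun g => ?_⟩
  have hv1 : (1 : ZMod 3).val = 1 := rfl
  have hv2 : (2 : ZMod 3).val = 2 := rfl
  have hg : g = 𝔢 1 0 ∨ g = 𝔢 2 0 ∨ g = 𝔢 0 1 ∨ g = 𝔢 0 2 ∨ g = 𝔢 1 1 ∨ g = 𝔢 2 1 ∨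
      g = 𝔢 1 2 ∨ g = 𝔢 2 2 := by
    revert g
    decide
  rcases hg with rfl | rfl | rfl | rfl | rfl | rfl | rfl | rfl <;>
  · simp only [okDiag_apply, oke_apply, mul_one, ZMod.val_zero, hv1, hv2, r20, r21, r22, r12,
      r11, c02, hu10, hu01]
    ring

lemma okDiag_factorization_unique (h h' : (OkI → R) ≃ₗ[R] (OkI → R)) {α β α' β' : R}
    (hα : α ^ 3 = 1) (hβ : β ^ 3 = 1) (he : h (oke R) = oke R) (he' : h' (oke R) = oke R)
    (hfac : ∀ x, h (okDiag R α β x) = h' (okDiag R α' β' x)) : h = h' ∧ α = α' ∧ β = β' := by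
  have hdiag : okDiag R (α' * α ^ 2) (β' * β ^ 2) (oke R) = okDiag R 1 1 (oke R) := by
    apply h'.injective
    rw [← okDiag_okDiag, ← hfac, okDiag_okDiag_sq hα hβ, he, okDiag_one_one, he']
  obtain ⟨hα', hβ'⟩ := okDiag_oke_injective hdiag
  obtain rfl : α = α' := by linear_combination α' * hα - α * hα'
  obtain rfl : β = β' := by linear_combination β' * hβ - β * hβ'
  refine ⟨LinearEquiv.ext fun x => ?_, rfl, rfl⟩
  rw [← okDiag_okDiag_sq hα hβ x, hfac]

theorem okubo_automorphism_factorization_general (F : Type) [Field F] [CharP F 3]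
    (R : Type) [CommRing R] [Algebra F R] :
    (∀ α β : R, α ^ 3 = 1 → β ^ 3 = 1 →
      Function.Bijective (okDiag R α β) ∧
      ∀ x y, okDiag R α β (okMul R x y) = okMul R (okDiag R α β x) (okDiag R α β y)) ∧
    (∀ φ : (OkI → R) ≃ₗ[R] (OkI → R),
      (∀ x y, φ (okMul R x y) = okMul R (φ x) (φ y)) →
      ∃! t : ((OkI → R) ≃ₗ[R] (OkI → R)) × R × R,
        (∀ x y, t.1 (okMul R x y) = okMul R (t.1 x) (t.1 y)) ∧
        t.1 (oke R) = oke R ∧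
        t.2.1 ^ 3 = 1 ∧ t.2.2 ^ 3 = 1 ∧
        ∀ x, φ x = t.1 (okDiag R t.2.1 t.2.2 x)) := by
  have h3 : (3 : R) = 0 := by
    rw [← map_ofNat (algebraMap F R) 3, CharP.ofNat_eq_zero, map_zero]
  refine ⟨fun α β hα hβ => ⟨(okDiagEquiv hα hβ).bijective, okDiag_okMul hα hβ⟩, fun φ hφ => ?_⟩
  obtain ⟨γ, δ, hγ, hδ, hu⟩ := exists_eq_okDiag_oke h3 fun k =>
    okMul_symm_oke_add_okMul_symm_oke h3 φ hφ (okE R k)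
  have hγ2 : (γ ^ 2) ^ 3 = 1 := by linear_combination (γ ^ 3 + 1) * hγ
  have hδ2 : (δ ^ 2) ^ 3 = 1 := by linear_combination (δ ^ 3 + 1) * hδ
  set h₀ := okDiagEquiv hγ hδ ≪≫ₗ φ
  have h₀_oke : h₀ (oke R) = oke R := by
    change φ (okDiag R γ δ (oke R)) = oke R
    rw [← hu, LinearEquiv.apply_symm_apply]
  have hφ_eq (x : OkI → R) : φ x = h₀ (okDiag R (γ ^ 2) (δ ^ 2) x) := by
    change φ x = φ (okDiag R γ δ (okDiag R (γ ^ 2) (δ ^ 2) x))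
    rw [okDiag_okDiag_sq hγ hδ]
  refine ⟨(h₀, γ ^ 2, δ ^ 2), ⟨fun x y => ?_, h₀_oke, hγ2, hδ2, hφ_eq⟩, ?_⟩
  · change φ (okDiag R γ δ (okMul R x y)) = okMul R (φ (okDiag R γ δ x)) (φ (okDiag R γ δ y))
    rw [okDiag_okMul hγ hδ, hφ]
  · rintro ⟨h, α, β⟩ ⟨-, he, hα, hβ, hfac⟩
    obtain ⟨rfl, rfl, rfl⟩ := okDiag_factorization_unique h h₀ hα hβ he h₀_oke
      fun x => (hfac x).symm.trans (hφ_eq x)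
    rfl

/-- Let `F` be algebraically closed of characteristic `3` and `R` a
commutative unital `F`-algebra.  For `α, β ∈ R` with `α³ = β³ = 1` the diagonal map
`d_{α,β}` is an automorphism of the split Okubo algebra `(O_R, *)` over `R`, and every
`R`-linear automorphism `φ` of `(O_R, *)` factors uniquely as `φ = h ∘ d_{α,β}` with `h`
an automorphism fixing `e = ∑_g e_g` and `α³ = β³ = 1`. -/
theorem okubo_automorphism_factorization (F : Type) [Field F] [IsAlgClosed F] [CharP F 3]
    (R : Type) [CommRing R] [Algebra F R] :
    (∀ α β : R, α ^ 3 = 1 → β ^ 3 = 1 →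
      Function.Bijective (okDiag R α β) ∧
      ∀ x y, okDiag R α β (okMul R x y) = okMul R (okDiag R α β x) (okDiag R α β y)) ∧
    (∀ φ : (OkI → R) ≃ₗ[R] (OkI → R),
      (∀ x y, φ (okMul R x y) = okMul R (φ x) (φ y)) →
      ∃! t : ((OkI → R) ≃ₗ[R] (OkI → R)) × R × R,
        (∀ x y, t.1 (okMul R x y) = okMul R (t.1 x) (t.1 y)) ∧
        t.1 (oke R) = oke R ∧
        t.2.1 ^ 3 = 1 ∧ t.2.2 ^ 3 = 1 ∧
        ∀ x, φ x = t.1 (okDiag R t.2.1 t.2.2 x)) :=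
  okubo_automorphism_factorization_general F R
end

section
/- Let f be a nonzero idempotent of the split Okubo algebra over a field F (f*f = f, f ≠ 0). Then n(f) = 1, and the new product x·y := (f*x)*(y*f) satisfies f·x = x = x·f for all x ∈ O and n(x·y) = n(x)·n(y) for all x, y ∈ O; that is, (O, ·, n) is a unital composition algebra with unity f. -/
/-!
The split Okubo algebra is a symmetric composition algebra: `n (x * y) = n x * n y` and
`x * (y * x) = n x • y = (x * y) * x`, identities that are checked coordinatewise on the explicit
multiplication table. For an idempotent `f ≠ 0` the second identity with `x = y = f` reads
`f = n f • f`, so `n f = 1`; then `f · x = f * (x * f) = x` and `x · f = (f * x) * f = x`,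
and `n (x · y) = n f * n x * n y * n f = n x * n y` (Kaplansky's trick).
-/

open scoped BigOperators

variable (R : Type) [CommRing R]

section KaplanskyTrick

variable {K M : Type*}

def kaplanskyMul (mul : M → M → M) (e x y : M) : M := mul (mul e x) (mul y e)

theorem eq_one_of_mul_self_of_mul_mul_self_left [Field K] [AddCommGroup M] [Module K M]
    (mul : M → M → M) (n : M → K) (mul_mul_self_left : ∀ x y, mul x (mul y x) = n x • y)
    {e : M} (he : mul e e = e) (he0 : e ≠ 0) : n e = 1 :=
  smul_left_injective K he0 <| by
    simpa only [he, one_smul] using (mul_mul_self_left e e).symm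

variable [Semiring K] [AddCommMonoid M] [Module K M] (mul : M → M → M) (n : M → K)
  {e : M}

theorem kaplanskyMul_unit_left (mul_mul_self_left : ∀ x y, mul x (mul y x) = n x • y)
    (he : mul e e = e) (hne : n e = 1) (x : M) : kaplanskyMul mul e e x = x := by
  rw [kaplanskyMul, he, mul_mul_self_left, hne, one_smul]

theorem kaplanskyMul_unit_right (mul_mul_self_right : ∀ x y, mul (mul x y) x = n x • y)
    (he : mul e e = e) (hne : n e = 1) (x : M) : kaplanskyMul mul e x e = x := by
  rw [kaplanskyMul, he, mul_mul_self_right, hne, one_smul]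

end KaplanskyTrick

theorem map_kaplanskyMul {K M : Type*} [CommMonoid K] (mul : M → M → M) (n : M → K)
    (map_mul : ∀ x y, n (mul x y) = n x * n y) {e : M} (hne : n e = 1) (x y : M) :
    n (kaplanskyMul mul e x y) = n x * n y := by
  rw [kaplanskyMul, map_mul, map_mul, map_mul, hne, one_mul, mul_one]

theorem OkI.sum_eq {M : Type*} [AddCommMonoid M] (f : OkI → M) :
    ∑ g : OkI, f g = f ⟨(1,0), by decide⟩ + f ⟨(2,0), by decide⟩ + f ⟨(0,1), by decide⟩ +
      f ⟨(0,2), by decide⟩ + f ⟨(1,1), by decide⟩ + f ⟨(2,2), by decide⟩ +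
      f ⟨(1,2), by decide⟩ + f ⟨(2,1), by decide⟩ := by
  rw [show (Finset.univ : Finset OkI) = {⟨(1,0), by decide⟩, ⟨(2,0), by decide⟩,
      ⟨(0,1), by decide⟩, ⟨(0,2), by decide⟩, ⟨(1,1), by decide⟩, ⟨(2,2), by decide⟩,
      ⟨(1,2), by decide⟩, ⟨(2,1), by decide⟩} by decide,
    Finset.sum_insert (by decide), Finset.sum_insert (by decide), Finset.sum_insert (by decide),
    Finset.sum_insert (by decide), Finset.sum_insert (by decide), Finset.sum_insert (by decide),
    Finset.sum_insert (by decide), Finset.sum_singleton]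
  abel

theorem OkI.funext {α : Type*} {u v : OkI → α}
    (h10 : u ⟨(1,0), by decide⟩ = v ⟨(1,0), by decide⟩)
    (h20 : u ⟨(2,0), by decide⟩ = v ⟨(2,0), by decide⟩)
    (h01 : u ⟨(0,1), by decide⟩ = v ⟨(0,1), by decide⟩)
    (h02 : u ⟨(0,2), by decide⟩ = v ⟨(0,2), by decide⟩)
    (h11 : u ⟨(1,1), by decide⟩ = v ⟨(1,1), by decide⟩)
    (h22 : u ⟨(2,2), by decide⟩ = v ⟨(2,2), by decide⟩)
    (h12 : u ⟨(1,2), by decide⟩ = v ⟨(1,2), by decide⟩)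
    (h21 : u ⟨(2,1), by decide⟩ = v ⟨(2,1), by decide⟩) : u = v := by
  funext ⟨⟨a, b⟩, hk⟩
  fin_cases a <;> fin_cases b
  exacts [absurd rfl hk, h01, h02, h10, h11, h12, h20, h21, h22]

theorem okc_eq_ite (g h : OkG) :
    okc R g h = if g.1 * h.2 - g.2 * h.1 = 0 then 1
      else if g.1 * h.2 - g.2 * h.1 = 1 then 0 else -1 := by
  rw [okc]
  generalize g.1 * h.2 - g.2 * h.1 = d
  rcases (by decide : ∀ d : ZMod 3, d = 0 ∨ d = 1 ∨ d = 2) d with rfl | rfl | rfl <;>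
    simp +decide [show (1 : ZMod 3).val = 1 from rfl, show (2 : ZMod 3).val = 2 from rfl]

theorem okMul_apply_10 (x y : OkI → R) :
    okMul R x y ⟨(1,0), by decide⟩ =
      x ⟨(2,0), by decide⟩ * y ⟨(2,0), by decide⟩ - x ⟨(0,1), by decide⟩ * y ⟨(1,2), by decide⟩ -
      x ⟨(1,1), by decide⟩ * y ⟨(0,2), by decide⟩ - x ⟨(2,1), by decide⟩ * y ⟨(2,2), by decide⟩ := by
  simp +decide only [okMul, LinearMap.mk₂_apply, okMulFun, OkI.sum_eq, okc_eq_ite, ↓reduceIte]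
  ring

theorem okMul_apply_20 (x y : OkI → R) :
    okMul R x y ⟨(2,0), by decide⟩ =
      x ⟨(1,0), by decide⟩ * y ⟨(1,0), by decide⟩ - x ⟨(0,2), by decide⟩ * y ⟨(2,1), by decide⟩ -
      x ⟨(2,2), by decide⟩ * y ⟨(0,1), by decide⟩ - x ⟨(1,2), by decide⟩ * y ⟨(1,1), by decide⟩ := by
  simp +decide only [okMul, LinearMap.mk₂_apply, okMulFun, OkI.sum_eq, okc_eq_ite, ↓reduceIte]
  ring

theorem okMul_apply_01 (x y : OkI → R) :
    okMul R x y ⟨(0,1), by decide⟩ =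
      -x ⟨(2,0), by decide⟩ * y ⟨(1,1), by decide⟩ + x ⟨(0,2), by decide⟩ * y ⟨(0,2), by decide⟩ -
      x ⟨(2,2), by decide⟩ * y ⟨(1,2), by decide⟩ - x ⟨(2,1), by decide⟩ * y ⟨(1,0), by decide⟩ := by
  simp +decide only [okMul, LinearMap.mk₂_apply, okMulFun, OkI.sum_eq, okc_eq_ite, ↓reduceIte]
  ring

theorem okMul_apply_02 (x y : OkI → R) :
    okMul R x y ⟨(0,2), by decide⟩ =
      -x ⟨(1,0), by decide⟩ * y ⟨(2,2), by decide⟩ + x ⟨(0,1), by decide⟩ * y ⟨(0,1), by decide⟩ -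
      x ⟨(1,1), by decide⟩ * y ⟨(2,1), by decide⟩ - x ⟨(1,2), by decide⟩ * y ⟨(2,0), by decide⟩ := by
  simp +decide only [okMul, LinearMap.mk₂_apply, okMulFun, OkI.sum_eq, okc_eq_ite, ↓reduceIte]
  ring

theorem okMul_apply_11 (x y : OkI → R) :
    okMul R x y ⟨(1,1), by decide⟩ =
      -x ⟨(2,0), by decide⟩ * y ⟨(2,1), by decide⟩ - x ⟨(0,1), by decide⟩ * y ⟨(1,0), by decide⟩ +
      x ⟨(2,2), by decide⟩ * y ⟨(2,2), by decide⟩ - x ⟨(1,2), by decide⟩ * y ⟨(0,2), by decide⟩ := by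
  simp +decide only [okMul, LinearMap.mk₂_apply, okMulFun, OkI.sum_eq, okc_eq_ite, ↓reduceIte]
  ring

theorem okMul_apply_22 (x y : OkI → R) :
    okMul R x y ⟨(2,2), by decide⟩ =
      -x ⟨(1,0), by decide⟩ * y ⟨(1,2), by decide⟩ - x ⟨(0,2), by decide⟩ * y ⟨(2,0), by decide⟩ +
      x ⟨(1,1), by decide⟩ * y ⟨(1,1), by decide⟩ - x ⟨(2,1), by decide⟩ * y ⟨(0,1), by decide⟩ := by
  simp +decide only [okMul, LinearMap.mk₂_apply, okMulFun, OkI.sum_eq, okc_eq_ite, ↓reduceIte]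
  ring

theorem okMul_apply_12 (x y : OkI → R) :
    okMul R x y ⟨(1,2), by decide⟩ =
      -x ⟨(1,0), by decide⟩ * y ⟨(0,2), by decide⟩ - x ⟨(0,1), by decide⟩ * y ⟨(1,1), by decide⟩ -
      x ⟨(2,2), by decide⟩ * y ⟨(2,0), by decide⟩ + x ⟨(2,1), by decide⟩ * y ⟨(2,1), by decide⟩ := by
  simp +decide only [okMul, LinearMap.mk₂_apply, okMulFun, OkI.sum_eq, okc_eq_ite, ↓reduceIte]
  ring

theorem okMul_apply_21 (x y : OkI → R) :
    okMul R x y ⟨(2,1), by decide⟩ =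
      -x ⟨(2,0), by decide⟩ * y ⟨(0,1), by decide⟩ - x ⟨(0,2), by decide⟩ * y ⟨(2,2), by decide⟩ -
      x ⟨(1,1), by decide⟩ * y ⟨(1,0), by decide⟩ + x ⟨(1,2), by decide⟩ * y ⟨(1,2), by decide⟩ := by
  simp +decide only [okMul, LinearMap.mk₂_apply, okMulFun, OkI.sum_eq, okc_eq_ite, ↓reduceIte]
  ring

theorem okN_okMul (x y : OkI → R) : okN R (okMul R x y) = okN R x * okN R y := by
  simp only [okN, okMul_apply_10, okMul_apply_20, okMul_apply_01, okMul_apply_02, okMul_apply_11,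
    okMul_apply_22, okMul_apply_12, okMul_apply_21]
  ring

theorem okMul_okMul_self_left (x y : OkI → R) : okMul R x (okMul R y x) = okN R x • y := by
  refine OkI.funext ?_ ?_ ?_ ?_ ?_ ?_ ?_ ?_ <;>
  · simp only [okN, okMul_apply_10, okMul_apply_20, okMul_apply_01, okMul_apply_02,
      okMul_apply_11, okMul_apply_22, okMul_apply_12, okMul_apply_21, Pi.smul_apply, smul_eq_mul]
    ring

theorem okMul_okMul_self_right (x y : OkI → R) : okMul R (okMul R x y) x = okN R x • y := by
  refine OkI.funext ?_ ?_ ?_ ?_ ?_ ?_ ?_ ?_ <;>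
  · simp only [okN, okMul_apply_10, okMul_apply_20, okMul_apply_01, okMul_apply_02,
      okMul_apply_11, okMul_apply_22, okMul_apply_12, okMul_apply_21, Pi.smul_apply, smul_eq_mul]
    ring

/-- If `f` is a nonzero idempotent of the split Okubo algebra over a
field `F`, then `n(f) = 1` and the product `x · y = (f*x)*(y*f)` is unital with unity `f`
and multiplicative with respect to the norm: `(O, ·, n)` is a unital composition algebra. -/
theorem okubo_idempotent_unital_composition (F : Type) [Field F]
    (f : OkI → F) (hf : okMul F f f = f) (hf0 : f ≠ 0)
    (cdot : (OkI → F) → (OkI → F) → (OkI → F))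
    (hcdot : ∀ x y, cdot x y = okMul F (okMul F f x) (okMul F y f)) :
    okN F f = 1 ∧
    (∀ x, cdot f x = x) ∧
    (∀ x, cdot x f = x) ∧
    (∀ x y, okN F (cdot x y) = okN F x * okN F y) := by
  obtain rfl : cdot = kaplanskyMul (okMul F · ·) f := funext₂ hcdot
  have hn : okN F f = 1 :=
    eq_one_of_mul_self_of_mul_mul_self_left _ _ (okMul_okMul_self_left F) hf hf0
  exact ⟨hn, kaplanskyMul_unit_left _ _ (okMul_okMul_self_left F) hf hn,
    kaplanskyMul_unit_right _ _ (okMul_okMul_self_right F) hf hn,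
    map_kaplanskyMul _ _ (okN_okMul F) hn⟩
end
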